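/- arXiv:2309.14691 — 4 statements merged into one kernel-verified Lean document; each statement's English description precedes it below -/
import Mathlib

section
/- For every ε with 0 < ε < 1/2 there exists H₀ > 0 such that for all H ≥ H₀, the map f(z) = h_H(z − 1/2) sends the interval [0, ε] into itself and is a contraction on [0, ε] (its derivative satisfies |f′(z)| < 1 for all z ∈ [0, ε], with a contraction constant strictly less than 1); consequently f has a unique fixed point in [0, ε], and this fixed point is stable. -/
/-!
Put `δ = 1/2 - ε`. On `[0, ε]` the argument `z - 1/2` of the sigmoid is at most `-δ`, where
`h_H ≤ exp (-δ H)` and `h_H' = H h_H (1 - h_H) ≤ H exp (-δ H)`. Since `H exp (-δ H) → 0`,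
for large `H` both bounds drop below `min ε 1`: then `f` maps `[0, ε]` into itself with
Lipschitz constant `< 1`, and the contraction mapping theorem on the complete set `[0, ε]`
yields the unique fixed point, which attracts every orbit starting in `[0, ε]`.
-/

open Filter

/-- The parametrized sigmoid `h_H(x) = 1/(1 + exp(−H·x))`. -/
noncomputable def sigmoidH (H x : ℝ) : ℝ := 1 / (1 + Real.exp (-H * x))

open Set Real Topology NNReal

theorem LipschitzOnWith.exists_fixedPoint_unique_tendsto_iterate {α : Type*} [MetricSpace α]
    {f : α → α} {s : Set α} {L : ℝ≥0} (hf : LipschitzOnWith L f s) (hL : L < 1)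
    (hs : IsComplete s) (hne : s.Nonempty) (hmaps : MapsTo f s s) :
    ∃ z ∈ s, f z = z ∧ (∀ y ∈ s, f y = y → y = z) ∧
      ∀ x ∈ s, Tendsto (fun k => f^[k] x) atTop (𝓝 z) := by
  have : CompleteSpace s := hs.completeSpace_coe
  have : Nonempty s := hne.to_subtype
  have hc : ContractingWith L (hmaps.restrict f s s) := ⟨hL, hf.mapsToRestrict hmaps⟩
  refine ⟨_, (ContractingWith.fixedPoint _ hc).2, congrArg Subtype.val hc.fixedPoint_isFixedPt,
    fun y hy hfy =>
      congrArg Subtype.val (hc.fixedPoint_unique (x := ⟨y, hy⟩) (Subtype.ext hfy)),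
    fun x hx => ?_⟩
  simpa only [Function.comp_def, hmaps.iterate_restrict, MapsTo.val_restrict_apply] using
    (continuous_subtype_val.tendsto _).comp (hc.tendsto_iterate_fixedPoint ⟨x, hx⟩)

section Sigmoid

variable {H x δ : ℝ}

lemma sigmoidH_pos (H x : ℝ) : 0 < sigmoidH H x := by
  unfold sigmoidH; positivity

lemma sigmoidH_lt_one (H x : ℝ) : sigmoidH H x < 1 := by
  unfold sigmoidH
  rw [div_lt_one (by positivity)]
  linarith [exp_pos (-H * x)]

lemma sigmoidH_le_exp (H x : ℝ) : sigmoidH H x ≤ exp (H * x) := by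
  unfold sigmoidH
  rw [div_le_iff₀ (by positivity), mul_add, ← exp_add]
  simp only [mul_one, neg_mul, add_neg_cancel, exp_zero]
  linarith [exp_pos (H * x)]

lemma hasDerivAt_sigmoidH (H x : ℝ) :
    HasDerivAt (sigmoidH H) (H * sigmoidH H x * (1 - sigmoidH H x)) x := by
  have hE : HasDerivAt (fun x => 1 + exp (-H * x)) (exp (-H * x) * -H) x :=
    (((hasDerivAt_id x).const_mul (-H)).exp.const_add 1).congr_deriv (by simp)
  have hpos : 0 < 1 + exp (-H * x) := by positivity
  have hs : sigmoidH H = fun x => (1 + exp (-H * x))⁻¹ := by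
    funext y
    simp [sigmoidH]
  rw [hs]
  refine (hE.inv hpos.ne').congr_deriv ?_
  field_simp
  ring

lemma sigmoidH_le_exp_neg_mul (hH : 0 ≤ H) (hx : x ≤ -δ) : sigmoidH H x ≤ exp (-δ * H) :=
  (sigmoidH_le_exp H x).trans (exp_le_exp.2 (by nlinarith))

lemma abs_deriv_sigmoidH_le (hH : 0 ≤ H) (hx : x ≤ -δ) :
    |deriv (sigmoidH H) x| ≤ H * exp (-δ * H) := by
  have hs := sigmoidH_pos H x
  have hs1 := sigmoidH_lt_one H x
  rw [(hasDerivAt_sigmoidH H x).deriv, abs_of_nonneg (by positivity)]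
  calc H * sigmoidH H x * (1 - sigmoidH H x) ≤ H * sigmoidH H x :=
      mul_le_of_le_one_right (by positivity) (by linarith)
    _ ≤ H * exp (-δ * H) := by gcongr; exact sigmoidH_le_exp_neg_mul hH hx

end Sigmoid

lemma exists_forall_ge_mul_exp_neg_mul_lt {δ c : ℝ} (hδ : 0 < δ) (hc : 0 < c) :
    ∃ H₀ ≥ 1, ∀ H ≥ H₀, H * exp (-δ * H) < c := by
  have hlim := (tendsto_rpow_mul_exp_neg_mul_atTop_nhds_zero 1 δ hδ).eventually
    (eventually_lt_nhds hc)
  obtain ⟨H₀, hH₀⟩ := eventually_atTop.1 (hlim.and (eventually_ge_atTop 1))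
  exact ⟨H₀, (hH₀ H₀ le_rfl).2, fun H hH => by simpa using (hH₀ H hH).1⟩

theorem stmt_6 (ε : ℝ) (hεpos : 0 < ε) (hεlt : ε < 1 / 2) :
    ∃ H₀ > (0 : ℝ), ∀ H ≥ H₀,
      let f : ℝ → ℝ := fun z => sigmoidH H (z - 1 / 2)
      -- `f` maps `[0, ε]` into itself
      Set.MapsTo f (Set.Icc 0 ε) (Set.Icc 0 ε) ∧
      -- the derivative of `f` is strictly less than 1 in absolute value on `[0, ε]`
      (∀ z ∈ Set.Icc (0 : ℝ) ε, |deriv f z| < 1) ∧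
      -- `f` is a contraction on `[0, ε]` with contraction constant strictly less than 1
      (∃ L : NNReal, L < 1 ∧ LipschitzOnWith L f (Set.Icc 0 ε)) ∧
      -- consequently `f` has a unique fixed point in `[0, ε]`, and it is stable:
      -- iterates of `f` starting anywhere in `[0, ε]` converge to it
      (∃ zf ∈ Set.Icc (0 : ℝ) ε, f zf = zf ∧
        (∀ z ∈ Set.Icc (0 : ℝ) ε, f z = z → z = zf) ∧
        (∀ z₀ ∈ Set.Icc (0 : ℝ) ε,
          Tendsto (fun k => f^[k] z₀) atTop (nhds zf))) := by
  set δ := 1 / 2 - ε with hδ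
  obtain ⟨H₀, hH₀, hsmall⟩ :=
    exists_forall_ge_mul_exp_neg_mul_lt (sub_pos.2 hεlt) (lt_min hεpos one_pos)
  refine ⟨H₀, by linarith, fun H hH => ?_⟩
  intro f
  have hH1 : 1 ≤ H := hH₀.trans hH
  have hK : H * exp (-δ * H) < min ε 1 := hsmall H hH
  have hshift : ∀ z ∈ Icc 0 ε, z - 1 / 2 ≤ -δ := fun z hz => by linarith [hz.2, hδ]
  have hmaps : MapsTo f (Icc 0 ε) (Icc 0 ε) := fun z hz =>
    ⟨(sigmoidH_pos _ _).le,
      calc f z ≤ exp (-δ * H) := sigmoidH_le_exp_neg_mul (by linarith) (hshift z hz)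
        _ ≤ H * exp (-δ * H) := le_mul_of_one_le_left (exp_pos _).le hH1
        _ ≤ ε := hK.le.trans (min_le_left _ _)⟩
  have hderiv : ∀ z ∈ Icc 0 ε, |deriv f z| ≤ H * exp (-δ * H) := fun z hz => by
    rw [deriv_comp_sub_const]
    exact abs_deriv_sigmoidH_le (by linarith) (hshift z hz)
  set L : ℝ≥0 := ⟨H * exp (-δ * H), by positivity⟩
  have hL : L < 1 := by
    rw [← NNReal.coe_lt_coe]
    exact hK.trans_le (min_le_right _ _)
  have hlip : LipschitzOnWith L f (Icc 0 ε) := by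
    refine (convex_Icc 0 ε).lipschitzOnWith_of_nnnorm_deriv_le
      (fun z _ => ((hasDerivAt_sigmoidH H _).comp_sub_const z (1 / 2)).differentiableAt)
      (fun z hz => ?_)
    rw [← NNReal.coe_le_coe, coe_nnnorm, Real.norm_eq_abs]
    exact hderiv z hz
  exact ⟨hmaps, fun z hz => (hderiv z hz).trans_lt (hK.trans_le (min_le_right _ _)),
    ⟨L, hL, hlip⟩, hlip.exists_fixedPoint_unique_tendsto_iterate hL isCompact_Icc.isComplete
      (nonempty_Icc.2 hεpos.le) hmaps⟩
end

section
/- Let M be a DFA with state set Fin n and input alphabet Fin m. For every state q ∈ Fin n and every input letter a ∈ Fin m, the second-order saturated-linear network step applied to the one-hot state vector exactly produces the one-hot vector of the next state: N(e(q), a) = e(δ(q, a)). -/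
/-- One-hot vector of an element of `Fin n`. -/
def oneHot {n : ℕ} (q : Fin n) : Fin n → ℝ := fun i => if i = q then 1 else 0

/-- Transition tensor of a DFA with transition function `δ`:
`W i j k = 1` if `i = δ j k` and `0` otherwise. -/
def transTensor {n m : ℕ} (δ : Fin n → Fin m → Fin n) : Fin n → Fin n → Fin m → ℝ :=
  fun i j k => if i = δ j k then 1 else 0

/-- The saturated-linear activation function. -/
noncomputable def satLin (x : ℝ) : ℝ := if x < 0 then 0 else if x ≤ 1 then x else 1

/-- The second-order saturated-linear network step of a DFA:
`N(z, a) i = σ(Σ_j W i j a * z j)`. -/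
noncomputable def netStep {n m : ℕ} (δ : Fin n → Fin m → Fin n)
    (z : Fin n → ℝ) (a : Fin m) : Fin n → ℝ :=
  fun i => satLin (∑ j : Fin n, transTensor δ i j a * z j)

theorem stmt_10 (n m : ℕ) (hn : 1 ≤ n) (hm : 1 ≤ m)
    (δ : Fin n → Fin m → Fin n) (q₀ : Fin n) (F : Finset (Fin n))
    (q : Fin n) (a : Fin m) :
    netStep δ (oneHot q) a = oneHot (δ q a) := by
  funext i
  have : (∑ j : Fin n, transTensor δ i j a * oneHot q j)
      = if i = δ q a then 1 else 0 := by
    rw [Finset.sum_eq_single q]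
    · simp [transTensor, oneHot]
    · intro j _ hj; simp [oneHot, hj]
    · simp
  show satLin _ = _
  rw [this]
  unfold satLin oneHot
  split <;> norm_num
end

section
/- Let M be a DFA with state set Fin n and input alphabet Fin m. For every state q ∈ Fin n and every input word w = a₁a₂…a_T over Fin m, iterating the second-order saturated-linear network step along the letters of w starting from the one-hot vector e(q) yields, after t steps (for every 0 ≤ t ≤ T), exactly the one-hot vector e(δ*(q, a₁…a_t)) of the DFA state reached after reading the first t letters; in particular the n-neuron network simulates the DFA in real time, using exactly one network step per input symbol. -/
/-- Iterating the network step along the letters of a word. -/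
noncomputable def netRun {n m : ℕ} (δ : Fin n → Fin m → Fin n)
    (z : Fin n → ℝ) (w : List (Fin m)) : Fin n → ℝ :=
  w.foldl (netStep δ) z

/-- The extension `δ*` of the DFA transition function to input words. -/
def dfaRun {n m : ℕ} (δ : Fin n → Fin m → Fin n) (q : Fin n) (w : List (Fin m)) : Fin n :=
  w.foldl δ q


lemma netStep_oneHot {n m : ℕ} (δ : Fin n → Fin m → Fin n) (q : Fin n) (a : Fin m) :
    netStep δ (oneHot q) a = oneHot (δ q a) := by
  funext i
  simp only [netStep, transTensor, oneHot]
  rw [Finset.sum_eq_single q]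
  · by_cases h : i = δ q a <;> simp [h, satLin]
  · intro b _ hb; simp [hb]
  · simp

lemma netRun_oneHot {n m : ℕ} (δ : Fin n → Fin m → Fin n) :
    ∀ (w : List (Fin m)) (q : Fin n),
      netRun δ (oneHot q) w = oneHot (dfaRun δ q w) := by
  intro w
  induction w with
  | nil => intro q; rfl
  | cons a w ih =>
    intro q
    simp only [netRun, dfaRun, List.foldl_cons]
    rw [netStep_oneHot]
    exact ih (δ q a)

theorem stmt_11 (n m : ℕ) (hn : 1 ≤ n) (hm : 1 ≤ m)
    (δ : Fin n → Fin m → Fin n) (q₀ : Fin n) (F : Finset (Fin n))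
    (q : Fin n) (w : List (Fin m)) :
    ∀ t ≤ w.length,
      netRun δ (oneHot q) (w.take t) = oneHot (dfaRun δ q (w.take t)) := by
  intro t _
  exact netRun_oneHot δ (w.take t) q
end

section
/- Let M be a DFA with state set Fin n and input alphabet Fin m. For every ε > 0 there exists H₀ > 0 such that for all H ≥ H₀, all states q ∈ Fin n, and all input letters a ∈ Fin m, the second-order sigmoid network step satisfies ‖N_H(e(q), a) − e(δ(q, a))‖_∞ ≤ ε. -/
/-- The second-order sigmoid network step of a DFA with sensitivity `H`:
`N_H(z, a) i = h_H((Σ_j W i j a * z j) − 1/2)`. -/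
noncomputable def netStepH {n m : ℕ} (δ : Fin n → Fin m → Fin n) (H : ℝ)
    (z : Fin n → ℝ) (a : Fin m) : Fin n → ℝ :=
  fun i => sigmoidH H ((∑ j : Fin n, transTensor δ i j a * z j) - 1 / 2)

/-
On a one-hot input the weighted sum feeding neuron `i` is `1` if `i = δ q a` and `0` otherwise,
so every neuron evaluates the sigmoid at `±1/2` and lies within `σ(-H/2) ≤ exp(-H/2)` of its
target bit; this bound tends to `0` as `H → ∞`, uniformly in `q`, `a` and `i`.
-/

open Real

lemma sigmoidH_eq_sigmoid (H x : ℝ) : sigmoidH H x = sigmoid (H * x) := by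
  simp only [sigmoidH, sigmoid, one_div, neg_mul]

lemma Real.sigmoid_le_exp (x : ℝ) : sigmoid x ≤ exp x := by
  rw [sigmoid, ← inv_inv (exp x), ← exp_neg]
  exact inv_anti₀ (exp_pos _) (by linarith)

lemma abs_sigmoidH_sub_half_sub_le (H : ℝ) {b : ℝ} (hb : b = 0 ∨ b = 1) :
    |sigmoidH H (b - 1 / 2) - b| ≤ exp (-H / 2) := by
  suffices |sigmoidH H (b - 1 / 2) - b| = sigmoid (-H / 2) from
    this ▸ sigmoid_le_exp _
  rcases hb with rfl | rfl
  · rw [sigmoidH_eq_sigmoid, sub_zero, abs_of_pos (sigmoid_pos _)]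
    ring_nf
  · rw [sigmoidH_eq_sigmoid, abs_of_neg (by linarith [sigmoid_lt_one (H * (1 - 1 / 2))]),
      neg_sub, neg_div, sigmoid_neg]
    ring_nf

lemma sum_transTensor_mul_oneHot {n m : ℕ} (δ : Fin n → Fin m → Fin n) (i q : Fin n)
    (a : Fin m) : ∑ j, transTensor δ i j a * oneHot q j = oneHot (δ q a) i := by
  simp [transTensor, oneHot]

lemma oneHot_apply_eq_zero_or_one {n : ℕ} (q i : Fin n) : oneHot q i = 0 ∨ oneHot q i = 1 := by
  unfold oneHot
  split_ifs <;> simp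

lemma netStepH_oneHot {n m : ℕ} (δ : Fin n → Fin m → Fin n) (H : ℝ) (q : Fin n) (a : Fin m)
    (i : Fin n) : netStepH δ H (oneHot q) a i = sigmoidH H (oneHot (δ q a) i - 1 / 2) := by
  rw [netStepH, sum_transTensor_mul_oneHot]

lemma norm_netStepH_oneHot_sub_le {n m : ℕ} (δ : Fin n → Fin m → Fin n) (H : ℝ) (q : Fin n)
    (a : Fin m) : ‖netStepH δ H (oneHot q) a - oneHot (δ q a)‖ ≤ exp (-H / 2) := by
  refine (pi_norm_le_iff_of_nonneg (exp_pos _).le).2 fun i => ?_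
  rw [Pi.sub_apply, Real.norm_eq_abs, netStepH_oneHot]
  exact abs_sigmoidH_sub_half_sub_le H (oneHot_apply_eq_zero_or_one _ _)

theorem stmt_13_general (n m : ℕ)
    (δ : Fin n → Fin m → Fin n) :
    ∀ ε > (0 : ℝ), ∃ H₀ > (0 : ℝ), ∀ H ≥ H₀, ∀ (q : Fin n) (a : Fin m),
      ‖netStepH δ H (oneHot q) a - oneHot (δ q a)‖ ≤ ε := by
  intro ε hε
  refine ⟨max 1 (-2 * log ε), by positivity, fun H hH q a => ?_⟩
  have hlog : -H / 2 ≤ log ε := by linarith [le_max_right 1 (-2 * log ε)]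
  calc ‖netStepH δ H (oneHot q) a - oneHot (δ q a)‖ ≤ exp (-H / 2) :=
        norm_netStepH_oneHot_sub_le δ H q a
    _ ≤ exp (log ε) := exp_le_exp.2 hlog
    _ = ε := exp_log hε

theorem stmt_13 (n m : ℕ) (hn : 1 ≤ n) (hm : 1 ≤ m)
    (δ : Fin n → Fin m → Fin n) (q₀ : Fin n) (F : Finset (Fin n)) :
    ∀ ε > (0 : ℝ), ∃ H₀ > (0 : ℝ), ∀ H ≥ H₀, ∀ (q : Fin n) (a : Fin m),
      ‖netStepH δ H (oneHot q) a - oneHot (δ q a)‖ ≤ ε :=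
  stmt_13_general n m δ
end
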